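/- arXiv:1607.00458 — 2 statements merged into one kernel-verified Lean document; each statement's English description precedes it below -/
import Mathlib

section
/- Let λ,μ > 0, r ∈ (0,1), and let g : [0,∞) → [0,∞) be continuous satisfying (g1'): there exist a₁,a₂ ≥ 0 and q ∈ [1,2*) with g(t) ≤ a₁ + a₂ t^{q−1} for all t ≥ 0. Define the singular energy E_{λ,μ}(u) := (1/2)‖u‖² − (μ/2*)∫_Ω (u⁺)^{2*} dx − (λ/r)∫_Ω (u⁺)^{r} dx − λ∫_Ω G(u⁺) dx, where u⁺ := max{u,0} and G(t) := ∫₀ᵗ g(τ)dτ. Then for every u ∈ X₀ with u > 0 a.e. in Ω there exists t₀ > 0 such that E_{λ,μ}(t u) < 0 for all t ∈ (0,t₀). In particular 0 is not a local minimizer of E_{λ,μ}. -/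
open MeasureTheory Filter Topology Set

noncomputable section

/-- Euclidean space `ℝⁿ`. -/
abbrev EV (n : ℕ) := EuclideanSpace ℝ (Fin n)

/-- The fractional critical Sobolev exponent `2* = 2n/(n-2s)`. -/
def twoStar (n : ℕ) (s : ℝ) : ℝ := 2 * n / (n - 2 * s)

/-- Gagliardo-type bilinear form `⟨u,v⟩ = ∬ (u(x)-u(y))(v(x)-v(y)) K(x-y) dx dy`. -/
def gInner {n : ℕ} (K : EV n → ℝ) (u v : EV n → ℝ) : ℝ :=
  ∫ p : EV n × EV n, (u p.1 - u p.2) * (v p.1 - v p.2) * K (p.1 - p.2)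

/-- Gagliardo norm `‖u‖ = ⟨u,u⟩^{1/2}`. -/
def gNorm {n : ℕ} (K : EV n → ℝ) (u : EV n → ℝ) : ℝ := Real.sqrt (gInner K u u)

/-- Membership in the space `X₀`: measurable, vanishing a.e. outside `Ω`,
with finite Gagliardo seminorm. -/
structure MemX0 {n : ℕ} (K : EV n → ℝ) (Ω : Set (EV n)) (u : EV n → ℝ) : Prop where
  meas : Measurable u
  zero : ∀ᵐ x ∂(volume : Measure (EV n)), x ∉ Ω → u x = 0
  fin : Integrable (fun p : EV n × EV n => (u p.1 - u p.2) ^ 2 * K (p.1 - p.2))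

/-- `L^p` norm (real exponent `p`) on `Ω`. -/
def lpNorm {n : ℕ} (Ω : Set (EV n)) (p : ℝ) (u : EV n → ℝ) : ℝ :=
  (∫ x in Ω, |u x| ^ p) ^ (1 / p)

/-- Weak convergence in `X₀`. -/
def WeakConv {n : ℕ} (K : EV n → ℝ) (Ω : Set (EV n)) (uj : ℕ → EV n → ℝ)
    (u : EV n → ℝ) : Prop :=
  ∀ v, MemX0 K Ω v → Tendsto (fun j => gInner K (uj j) v) atTop (𝓝 (gInner K u v))

/-- The singular kernel `|x|^{-(n+2s)}` of the fractional Laplacian. -/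
def fracKernel (n : ℕ) (s : ℝ) : EV n → ℝ := fun x => ‖x‖ ^ (-((n : ℝ) + 2 * s))

/-- The energy functional `E_{λ,μ}`. -/
def energy {n : ℕ} (s : ℝ) (K : EV n → ℝ) (Ω : Set (EV n)) (μ lam : ℝ)
    (g : ℝ → ℝ) (u : EV n → ℝ) : ℝ :=
  1 / 2 * gNorm K u ^ 2 - μ / twoStar n s * (∫ x in Ω, |u x| ^ twoStar n s)
    - lam * ∫ x in Ω, (∫ τ in (0:ℝ)..(u x), g τ)

/-- The functional `Ê_μ`. -/
def energyHat {n : ℕ} (s : ℝ) (K : EV n → ℝ) (Ω : Set (EV n)) (μ : ℝ)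
    (u : EV n → ℝ) : ℝ :=
  1 / 2 * gNorm K u ^ 2 - μ / twoStar n s * (∫ x in Ω, |u x| ^ twoStar n s)

/-- The functional `Ẽ_{λ,μ}`. -/
def energyTilde {n : ℕ} (s : ℝ) (K : EV n → ℝ) (Ω : Set (EV n)) (μ lam : ℝ)
    (g : ℝ → ℝ) (u : EV n → ℝ) : ℝ :=
  μ / twoStar n s * (∫ x in Ω, |u x| ^ twoStar n s)
    + lam * ∫ x in Ω, (∫ τ in (0:ℝ)..(u x), g τ)

/-- The energy functional of the singular problem. -/
def energySing {n : ℕ} (s : ℝ) (K : EV n → ℝ) (Ω : Set (EV n)) (μ lam r : ℝ)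
    (g : ℝ → ℝ) (u : EV n → ℝ) : ℝ :=
  1 / 2 * gNorm K u ^ 2 - μ / twoStar n s * (∫ x in Ω, (max (u x) 0) ^ twoStar n s)
    - lam / r * (∫ x in Ω, (max (u x) 0) ^ r)
    - lam * ∫ x in Ω, (∫ τ in (0:ℝ)..(max (u x) 0), g τ)

/-!
Near `0` only the singular term matters. Along a ray `t ↦ t v` the quadratic part is
`‖v‖² t² / 2`, the critical and `G`-terms are nonpositive, and the singular term is
`-(λ/r) t^r ∫_Ω (v⁺)^r` with `r < 2`; so the energy is negative for small `t > 0` as soon as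
`∫_Ω (v⁺)^r > 0`. This integral is a genuine (finite) one because `X₀ ⊆ L²(Ω)`: by (k2) the kernel
is bounded below on `Ω × A` for a ball `A` outside the bounded set `Ω`, where `u = 0`, so the
Gagliardo energy dominates `∫_Ω u²`. For the second claim, the nonzero element of `X₀` provided
by the Sobolev quotient, or its negative, is positive on a non-null part of `Ω`.
-/

section Integrability

variable {α : Type*} [MeasurableSpace α] {μ : Measure α}

-- Fix `y ∈ A` with `u y = 0` in the double integral.
theorem integrable_sq_restrict_of_integrable_prod [SFinite μ] {u : α → ℝ} (hu : Measurable u)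
    {k : α × α → ℝ} {Ω A : Set α} (hΩ : MeasurableSet Ω) (hA : MeasurableSet A) (hA0 : μ A ≠ 0)
    {c : ℝ} (hc : 0 < c) (hk : ∀ x ∈ Ω, ∀ y ∈ A, c ≤ k (x, y))
    (huA : ∀ᵐ y ∂μ.restrict A, u y = 0)
    (hint : Integrable (fun p : α × α => (u p.1 - u p.2) ^ 2 * k p) (μ.prod μ)) :
    Integrable (fun x => u x ^ 2) (μ.restrict Ω) := by
  have hbound : ∀ᵐ p ∂(μ.restrict Ω).prod (μ.restrict A), p.1 ∈ Ω ∧ p.2 ∈ A ∧ u p.2 = 0 := by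
    filter_upwards [Measure.quasiMeasurePreserving_fst.ae (ae_restrict_mem hΩ),
      Measure.quasiMeasurePreserving_snd.ae ((ae_restrict_mem hA).and huA)] with p h1 h2
    exact ⟨h1, h2⟩
  have hprod :
      Integrable (fun p : α × α => c * u p.1 ^ 2) ((μ.restrict Ω).prod (μ.restrict A)) := by
    refine Integrable.mono' (g := fun p => (u p.1 - u p.2) ^ 2 * k p) ?_
      ((hu.comp measurable_fst).pow_const 2 |>.const_mul c).aestronglyMeasurable ?_
    · rw [Measure.prod_restrict]
      exact hint.restrict
    · filter_upwards [hbound] with p ⟨h1, h2, h0⟩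
      rw [h0, sub_zero, Real.norm_of_nonneg (by positivity), mul_comm]
      exact mul_le_mul_of_nonneg_left (hk _ h1 _ h2) (sq_nonneg _)
  have : (ae (μ.restrict A)).NeBot := ae_neBot.mpr (by rwa [Ne, Measure.restrict_eq_zero])
  obtain ⟨y, hy⟩ := hprod.prod_left_ae.exists
  simpa [hc.ne'] using hy.const_mul c⁻¹

theorem integrable_posPart_rpow [IsFiniteMeasure μ] {v : α → ℝ} (hv : MemLp v 2 μ) {r : ℝ}
    (hr0 : 0 ≤ r) (hr2 : r ≤ 2) : Integrable (fun x => max (v x) 0 ^ r) μ := by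
  have h := (hv.pos_part.mono_exponent (p := ENNReal.ofReal r) (by
    simpa using ENNReal.ofReal_le_ofReal hr2)).integrable_norm_rpow'
  rw [ENNReal.toReal_ofReal hr0] at h
  simpa only [Real.norm_of_nonneg (le_max_right _ _)] using h

theorem setIntegral_posPart_rpow_pos {v : α → ℝ} {Ω : Set α} {r : ℝ}
    (hint : Integrable (fun x => max (v x) 0 ^ r) (μ.restrict Ω))
    (hv : ∃ᵐ x ∂μ, x ∈ Ω ∧ 0 < v x) : 0 < ∫ x in Ω, max (v x) 0 ^ r ∂μ := by
  rw [integral_pos_iff_support_of_nonneg_ae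
    (Eventually.of_forall fun x => Real.rpow_nonneg (le_max_right _ _) r) hint]
  refine lt_of_lt_of_le (pos_iff_ne_zero.mpr (frequently_ae_iff.mp hv)) ?_
  refine le_trans (measure_mono fun x hx => ?_) (Measure.le_restrict_apply _ _)
  exact ⟨(Real.rpow_pos_of_pos (lt_max_of_lt_left hx.2) r).ne', hx.1⟩

end Integrability

theorem MemX0.integrable_sq {n : ℕ} (hn : n ≠ 0) {s : ℝ} (hs : 0 ≤ s) {K : EV n → ℝ}
    {Ω : Set (EV n)} (hΩ : MeasurableSet Ω) (hΩb : Bornology.IsBounded Ω)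
    (hK2 : ∃ k₀ > 0, ∀ x : EV n, x ≠ 0 → k₀ * ‖x‖ ^ (-((n : ℝ) + 2 * s)) ≤ K x)
    {u : EV n → ℝ} (hu : MemX0 K Ω u) : Integrable (fun x => u x ^ 2) (volume.restrict Ω) := by
  obtain ⟨k₀, hk₀, hK⟩ := hK2
  obtain ⟨R, hR, hΩR⟩ := hΩb.subset_ball_lt 0 0
  have : NeZero n := ⟨hn⟩
  obtain ⟨z, hz⟩ := exists_norm_eq (EV n) (by positivity : 0 ≤ 2 * R)
  have hdisj : Disjoint Ω (Metric.ball z R) :=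
    (Metric.ball_disjoint_ball (by rw [dist_zero_left, hz]; linarith)).mono_left hΩR
  refine integrable_sq_restrict_of_integrable_prod (k := fun p => K (p.1 - p.2)) hu.meas hΩ
    measurableSet_ball (Metric.measure_ball_pos _ z hR).ne'
    (c := k₀ * (4 * R) ^ (-((n : ℝ) + 2 * s))) (by positivity) ?_ ?_ ?_
  · intro x hx y hy
    have hxy : x - y ≠ 0 := sub_ne_zero.mpr (hdisj.ne_of_mem hx hy)
    have hx' : ‖x‖ < R := mem_ball_zero_iff.mp (hΩR hx)
    have hy' : ‖y - z‖ < R := mem_ball_iff_norm.mp hy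
    have hxy' : ‖x - y‖ ≤ 4 * R := by
      linarith [norm_sub_le x y, norm_le_insert' y z]
    calc k₀ * (4 * R) ^ (-((n : ℝ) + 2 * s))
        ≤ k₀ * ‖x - y‖ ^ (-((n : ℝ) + 2 * s)) := by
          refine mul_le_mul_of_nonneg_left (Real.rpow_le_rpow_of_nonpos (norm_pos_iff.mpr hxy)
            hxy' ?_) hk₀.le
          linarith [(Nat.cast_nonneg n : (0 : ℝ) ≤ n)]
      _ ≤ K (x - y) := hK _ hxy
  · filter_upwards [ae_restrict_of_ae hu.zero, ae_restrict_mem measurableSet_ball] with y hy hyA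
    exact hy (hdisj.notMem_of_mem_right hyA)
  · rw [← Measure.volume_eq_prod]
    exact hu.fin

section Energy

variable {n : ℕ} {s : ℝ} {K : EV n → ℝ} {Ω : Set (EV n)} {μ lam r : ℝ} {g : ℝ → ℝ}

theorem twoStar_pos (hs : 0 ≤ s) (hn : 2 * s < n) : 0 < twoStar n s :=
  div_pos (by linarith) (by linarith)

theorem gNorm_const_mul (K : EV n → ℝ) {t : ℝ} (ht : 0 ≤ t) (u : EV n → ℝ) :
    gNorm K (fun x => t * u x) = t * gNorm K u := by
  have h : gInner K (fun x => t * u x) (fun x => t * u x) = t ^ 2 * gInner K u u := by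
    rw [gInner, gInner, ← integral_const_mul]
    congr 1
    ext p
    ring
  rw [gNorm, gNorm, h, Real.sqrt_mul (sq_nonneg t), Real.sqrt_sq ht]

theorem MemX0.const_mul {u : EV n → ℝ} (hu : MemX0 K Ω u) (t : ℝ) :
    MemX0 K Ω (fun x => t * u x) where
  meas := hu.meas.const_mul t
  zero := hu.zero.mono fun x hx hxΩ => by rw [hx hxΩ, mul_zero]
  fin := by
    simpa only [← mul_sub, mul_pow, mul_assoc] using hu.fin.const_mul (t ^ 2)

theorem energySing_zero (h2 : twoStar n s ≠ 0) (hr : r ≠ 0) :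
    energySing s K Ω μ lam r g (fun _ => 0) = 0 := by
  simp [energySing, gNorm, gInner, Real.zero_rpow h2, Real.zero_rpow hr]

theorem energySing_const_mul_le (hμ : 0 ≤ μ) (h2 : 0 ≤ twoStar n s) (hlam : 0 ≤ lam)
    (hg : ∀ τ, 0 ≤ τ → 0 ≤ g τ) {t : ℝ} (ht : 0 ≤ t) (v : EV n → ℝ) :
    energySing s K Ω μ lam r g (fun x => t * v x) ≤
      gNorm K v ^ 2 / 2 * t ^ 2 - lam / r * (∫ x in Ω, max (v x) 0 ^ r) * t ^ r := by
  have hsing : ∫ x in Ω, max (t * v x) 0 ^ r = t ^ r * ∫ x in Ω, max (v x) 0 ^ r := by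
    rw [← integral_const_mul]
    congr 1
    ext x
    rw [← Real.mul_rpow ht (le_max_right _ _), mul_max_of_nonneg _ _ ht, mul_zero]
  have hcrit : 0 ≤ μ / twoStar n s * ∫ x in Ω, max (t * v x) 0 ^ twoStar n s :=
    mul_nonneg (div_nonneg hμ h2) (integral_nonneg fun x => Real.rpow_nonneg (le_max_right _ _) _)
  have hG : 0 ≤ lam * ∫ x in Ω, ∫ τ in (0:ℝ)..max (t * v x) 0, g τ :=
    mul_nonneg hlam (integral_nonneg fun x =>
      intervalIntegral.integral_nonneg (le_max_right _ _) fun τ hτ => hg τ hτ.1)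
  rw [energySing, gNorm_const_mul K ht, hsing]
  linarith

theorem eventually_mul_sq_sub_mul_rpow_neg {a b r : ℝ} (hb : 0 < b) (hr : r < 2) :
    ∀ᶠ t in 𝓝[>] (0 : ℝ), a * t ^ 2 - b * t ^ r < 0 := by
  have hlim : Tendsto (fun t : ℝ => a * t ^ (2 - r)) (𝓝[>] 0) (𝓝 0) := by
    have h := ((Real.continuousAt_rpow_const 0 (2 - r) (Or.inr (by linarith))).const_mul a)
    simpa [Real.zero_rpow (by linarith : 2 - r ≠ 0)] using h.tendsto.mono_left nhdsWithin_le_nhds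
  filter_upwards [hlim.eventually (gt_mem_nhds hb), self_mem_nhdsWithin] with t hlt (ht : 0 < t)
  have hsplit : t ^ 2 = t ^ r * t ^ (2 - r) := by
    rw [← Real.rpow_add ht, add_sub_cancel, Real.rpow_two]
  rw [hsplit, show a * (t ^ r * t ^ (2 - r)) - b * t ^ r = t ^ r * (a * t ^ (2 - r) - b) by ring]
  exact mul_neg_of_pos_of_neg (Real.rpow_pos_of_pos ht r) (by linarith)

theorem eventually_energySing_const_mul_neg (hμ : 0 ≤ μ) (h2 : 0 ≤ twoStar n s) (hlam : 0 < lam)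
    (hr0 : 0 < r) (hr2 : r < 2) (hg : ∀ τ, 0 ≤ τ → 0 ≤ g τ) {v : EV n → ℝ}
    (hI : 0 < ∫ x in Ω, max (v x) 0 ^ r) :
    ∀ᶠ t in 𝓝[>] (0 : ℝ), energySing s K Ω μ lam r g (fun x => t * v x) < 0 := by
  filter_upwards [eventually_mul_sq_sub_mul_rpow_neg (a := gNorm K v ^ 2 / 2)
    (by positivity : 0 < lam / r * ∫ x in Ω, max (v x) 0 ^ r) hr2, self_mem_nhdsWithin]
    with t hneg (ht : 0 < t)
  exact (energySing_const_mul_le hμ h2 hlam.le hg ht.le v).trans_lt hneg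

end Energy

section X0

variable {n : ℕ} {s : ℝ} {K : EV n → ℝ} {Ω : Set (EV n)} {u : EV n → ℝ}

theorem MemX0.exists_frequently_pos (hu : MemX0 K Ω u) (hne : ¬ ∀ᵐ x, u x = 0) :
    ∃ v, MemX0 K Ω v ∧ ∃ᵐ x, x ∈ Ω ∧ 0 < v x := by
  have h : ∃ᵐ x, (x ∈ Ω ∧ 0 < u x) ∨ (x ∈ Ω ∧ 0 < -1 * u x) := by
    refine ((not_eventually.mp hne).and_eventually hu.zero).mono fun x ⟨hx, hxΩ⟩ => ?_
    have hΩx : x ∈ Ω := by_contra fun h => hx (hxΩ h)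
    rcases Ne.lt_or_gt hx with h | h
    · exact Or.inr ⟨hΩx, by linarith⟩
    · exact Or.inl ⟨hΩx, h⟩
  rcases frequently_or_distrib.mp h with h | h
  · exact ⟨u, hu, h⟩
  · exact ⟨_, hu.const_mul (-1), h⟩

theorem MemX0.eventually_energySing_neg (hs : 0 ≤ s) (hn : 2 * s < n)
    (hΩ : MeasurableSet Ω) (hΩb : Bornology.IsBounded Ω)
    (hK2 : ∃ k₀ > 0, ∀ x : EV n, x ≠ 0 → k₀ * ‖x‖ ^ (-((n : ℝ) + 2 * s)) ≤ K x)
    {μ lam r : ℝ} (hμ : 0 ≤ μ) (hlam : 0 < lam) (hr0 : 0 < r) (hr2 : r < 2)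
    {g : ℝ → ℝ} (hg : ∀ τ, 0 ≤ τ → 0 ≤ g τ) (hu : MemX0 K Ω u)
    (hpos : ∃ᵐ x, x ∈ Ω ∧ 0 < u x) :
    ∀ᶠ t in 𝓝[>] (0 : ℝ), energySing s K Ω μ lam r g (fun x => t * u x) < 0 := by
  have hn0 : n ≠ 0 := by
    rintro rfl
    norm_num at hn
    linarith
  have : IsFiniteMeasure (volume.restrict Ω) := isFiniteMeasure_restrict.mpr hΩb.measure_lt_top.ne
  have hL2 : MemLp u 2 (volume.restrict Ω) :=
    (memLp_two_iff_integrable_sq hu.meas.aestronglyMeasurable).mpr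
      (hu.integrable_sq hn0 hs hΩ hΩb hK2)
  exact eventually_energySing_const_mul_neg hμ (twoStar_pos hs hn).le hlam hr0 hr2 hg
    (setIntegral_posPart_rpow_pos (integrable_posPart_rpow hL2 hr0.le hr2.le) hpos)

end X0

theorem statement13_general
    (n : ℕ) (s : ℝ) (hs : s ∈ Set.Ioo (0:ℝ) 1) (hn : 2 * s < n)
    (Ω : Set (EV n)) (hΩo : IsOpen Ω) (hΩne : Ω.Nonempty) (hΩb : Bornology.IsBounded Ω)
    (K : EV n → ℝ)
    (hK2 : ∃ k₀ > 0, ∀ x : EV n, x ≠ 0 → k₀ * ‖x‖ ^ (-((n : ℝ) + 2 * s)) ≤ K x)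
    (c : ℝ)
    (hclub : IsLUB {ρ : ℝ | ∃ u, MemX0 K Ω u ∧
        ¬ (∀ᵐ x ∂(volume : Measure (EV n)), u x = 0) ∧
        ρ = lpNorm Ω (twoStar n s) u / gNorm K u} c)
    (lam μ : ℝ) (hlam : 0 < lam) (hμ : 0 < μ)
    (r : ℝ) (hr : r ∈ Set.Ioo (0:ℝ) 1)
    -- `g : [0,∞) → [0,∞)` continuous satisfying (g1'):
    (g : ℝ → ℝ) (hgpos : ∀ t : ℝ, 0 ≤ t → 0 ≤ g t) :
    (∀ u : EV n → ℝ, MemX0 K Ω u →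
      (∀ᵐ x ∂(volume : Measure (EV n)), x ∈ Ω → 0 < u x) →
      ∃ t₀ > (0:ℝ), ∀ t : ℝ, t ∈ Set.Ioo 0 t₀ →
        energySing s K Ω μ lam r g (fun x => t * u x) < 0) ∧
    (∀ ε > (0:ℝ), ∃ w : EV n → ℝ, MemX0 K Ω w ∧ gNorm K w < ε ∧
      energySing s K Ω μ lam r g w < energySing s K Ω μ lam r g (fun _ => 0)) := by
  have hneg : ∀ v, MemX0 K Ω v → (∃ᵐ x, x ∈ Ω ∧ 0 < v x) →
      ∀ᶠ t in 𝓝[>] (0 : ℝ), energySing s K Ω μ lam r g (fun x => t * v x) < 0 :=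
    fun v hv hpos => hv.eventually_energySing_neg hs.1.le hn hΩo.measurableSet hΩb hK2
      hμ.le hlam hr.1 (by linarith [hr.2]) hgpos hpos
  refine ⟨fun u hu hupos => ?_, fun ε hε => ?_⟩
  · have hpos : ∃ᵐ x, x ∈ Ω ∧ 0 < u x :=
      ((frequently_ae_iff.mpr (hΩo.measure_ne_zero volume hΩne)).and_eventually hupos).mono
        fun x h => ⟨h.1, h.2 h.1⟩
    obtain ⟨t₀, ht₀, hsub⟩ := mem_nhdsGT_iff_exists_Ioo_subset.mp (hneg u hu hpos)
    exact ⟨t₀, ht₀, fun t ht => hsub ht⟩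
  · obtain ⟨-, u₀, hu₀, hne, -⟩ := hclub.nonempty
    obtain ⟨v, hv, hpos⟩ := hu₀.exists_frequently_pos hne
    have hsmall : ∀ᶠ t in 𝓝[>] (0 : ℝ), gNorm K (fun x => t * v x) < ε := by
      have h : Tendsto (fun t => t * gNorm K v) (𝓝[>] 0) (𝓝 0) := by
        simpa using ((tendsto_id (x := 𝓝 (0 : ℝ))).mul_const (gNorm K v)).mono_left
          nhdsWithin_le_nhds
      filter_upwards [h.eventually (gt_mem_nhds hε), self_mem_nhdsWithin] with t hlt (ht : 0 < t)
      rwa [gNorm_const_mul K ht.le]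
    obtain ⟨t, hE, hN⟩ := ((hneg v hv hpos).and hsmall).exists
    refine ⟨_, hv.const_mul t, hN, ?_⟩
    rwa [energySing_zero (twoStar_pos hs.1.le hn).ne' hr.1.ne']

/-- **Non-triviality of the minimizer for the singular problem** (final step in
the proof of Theorem 3.5): for every `u ∈ X₀` with `u > 0` a.e. in `Ω`, the
singular energy satisfies `E_{λ,μ}(t u) < 0` for all small `t > 0`; in
particular `0` is not a local minimizer. -/
theorem statement13
    (n : ℕ) (s : ℝ) (hs : s ∈ Set.Ioo (0:ℝ) 1) (hn : 2 * s < n)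
    (Ω : Set (EV n)) (hΩo : IsOpen Ω) (hΩne : Ω.Nonempty) (hΩb : Bornology.IsBounded Ω)
    (K : EV n → ℝ)
    (hKpos : ∀ x : EV n, x ≠ 0 → 0 < K x)
    (hK1 : Integrable (fun x : EV n => min (‖x‖ ^ 2) 1 * K x))
    (hK2 : ∃ k₀ > 0, ∀ x : EV n, x ≠ 0 → k₀ * ‖x‖ ^ (-((n : ℝ) + 2 * s)) ≤ K x)
    (c : ℝ) (hc : 0 < c)
    (hclub : IsLUB {ρ : ℝ | ∃ u, MemX0 K Ω u ∧
        ¬ (∀ᵐ x ∂(volume : Measure (EV n)), u x = 0) ∧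
        ρ = lpNorm Ω (twoStar n s) u / gNorm K u} c)
    (lam μ : ℝ) (hlam : 0 < lam) (hμ : 0 < μ)
    (r : ℝ) (hr : r ∈ Set.Ioo (0:ℝ) 1)
    -- `g : [0,∞) → [0,∞)` continuous satisfying (g1'):
    (g : ℝ → ℝ) (hgc : ContinuousOn g (Set.Ici 0)) (hgpos : ∀ t : ℝ, 0 ≤ t → 0 ≤ g t)
    (a₁ a₂ q : ℝ) (ha₁ : 0 ≤ a₁) (ha₂ : 0 ≤ a₂) (hq₁ : 1 ≤ q) (hq₂ : q < twoStar n s)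
    (hg1 : ∀ t : ℝ, 0 ≤ t → g t ≤ a₁ + a₂ * t ^ (q - 1)) :
    (∀ u : EV n → ℝ, MemX0 K Ω u →
      (∀ᵐ x ∂(volume : Measure (EV n)), x ∈ Ω → 0 < u x) →
      ∃ t₀ > (0:ℝ), ∀ t : ℝ, t ∈ Set.Ioo 0 t₀ →
        energySing s K Ω μ lam r g (fun x => t * u x) < 0) ∧
    (∀ ε > (0:ℝ), ∃ w : EV n → ℝ, MemX0 K Ω w ∧ gNorm K w < ε ∧
      energySing s K Ω μ lam r g w < energySing s K Ω μ lam r g (fun _ => 0)) :=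
  statement13_general n s hs hn Ω hΩo hΩne hΩb K hK2 c hclub lam μ hlam hμ r hr g hgpos
end
end

section
/- Let λ,μ > 0 and let g : ℝ → ℝ be continuous satisfying (g1) and (g3): lim_{t→0} g(t)/t = 0. Then there exist ρ > 0 and α > 0 such that E_{λ,μ}(u) ≥ α for every u ∈ X₀ with ‖u‖ = ρ, where E_{λ,μ}(u) := (1/2)‖u‖² − (μ/2*)∫_Ω |u|^{2*} dx − λ∫_Ω G(u) dx. -/
open MeasureTheory Filter Topology Set

noncomputable section

/-!
By (g3) and (g1), for every `ε > 0` there is `C` with `|G t| ≤ ε t² + C |t|^{2*}`. The embeddings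
`X₀ ↪ L²(Ω)` and `X₀ ↪ L^{2*}(Ω)` then give
`E(u) ≥ (1/2 - λ ε c₂²) ‖u‖² - (μ/2* + λ C) c_{2*}^{2*} ‖u‖^{2*}`, and since `2* > 2` the choice
`λ ε c₂² = 1/4` and a small radius `ρ` yield `E ≥ ρ²/8` on the sphere `‖u‖ = ρ`.

The embedding inequalities bound `∫_Ω |u|^p` only when `|u|^p` is integrable (otherwise the
integral, hence `lpNorm`, is `0`). Integrability comes from monotone convergence applied to the
bounded truncations of `u`, which stay in `X₀` with no larger Gagliardo norm.
-/

def trunc (N a : ℝ) : ℝ := max (min a N) (-N)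

lemma abs_trunc {N : ℝ} (hN : 0 ≤ N) (a : ℝ) : |trunc N a| = min |a| N := by
  unfold trunc
  rcases le_total 0 a with h | h
  · rw [abs_of_nonneg h, max_eq_left (le_min (by linarith) (by linarith)),
      abs_of_nonneg (le_min h hN)]
  · rw [abs_of_nonpos h, min_eq_left (h.trans hN), abs_of_nonpos (max_le h (by linarith)),
      ← min_neg_neg, neg_neg]

lemma trunc_zero {N : ℝ} (hN : 0 ≤ N) : trunc N 0 = 0 :=
  abs_eq_zero.mp <| by simp [abs_trunc hN, hN]

lemma lipschitzWith_trunc (N : ℝ) : LipschitzWith 1 (trunc N) :=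
  (LipschitzWith.id.min_const N).max_const (-N)

@[fun_prop]
lemma measurable_trunc (N : ℝ) : Measurable (trunc N) := by
  unfold trunc; fun_prop

lemma integrable_abs_rpow_of_integral_trunc_le {α : Type*} [MeasurableSpace α] {μ : Measure α}
    [IsFiniteMeasure μ] {f : α → ℝ} (hf : Measurable f) {p B : ℝ} (hp : 0 < p)
    (hB : ∀ N : ℕ, ∫ x, |trunc N (f x)| ^ p ∂μ ≤ B) :
    Integrable (fun x => |f x| ^ p) μ ∧ ∫ x, |f x| ^ p ∂μ ≤ B := by
  set F : ℕ → α → ℝ := fun N x => |trunc N (f x)| ^ p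
  have hF_eq (N : ℕ) (x : α) : F N x = min |f x| N ^ p := by simp [F, abs_trunc N.cast_nonneg]
  have hF_int (N : ℕ) : Integrable (F N) μ := by
    refine .of_bound (by fun_prop) ((N : ℝ) ^ p) (.of_forall fun x => ?_)
    rw [hF_eq, Real.norm_of_nonneg (by positivity)]
    exact Real.rpow_le_rpow (by positivity) (min_le_right _ _) hp.le
  have hF_mono : Monotone fun N x => ENNReal.ofReal (F N x) := fun N M hNM x => by
    simp only [hF_eq]
    gcongr
  have hF_sup (x : α) : ⨆ N : ℕ, ENNReal.ofReal (F N x) = ENNReal.ofReal (|f x| ^ p) := by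
    refine le_antisymm (iSup_le fun N => ?_) (le_iSup_of_le ⌈|f x|⌉₊ ?_)
    · rw [hF_eq]; gcongr; exact min_le_left _ _
    · rw [hF_eq, min_eq_left (Nat.le_ceil _)]
  have hlint : ∫⁻ x, ENNReal.ofReal (|f x| ^ p) ∂μ ≤ ENNReal.ofReal B := by
    simp_rw [← hF_sup]
    rw [lintegral_iSup (fun N => by fun_prop) hF_mono]
    refine iSup_le fun N => ?_
    rw [← ofReal_integral_eq_lintegral_ofReal (hF_int N) (.of_forall fun x => by positivity)]
    exact ENNReal.ofReal_le_ofReal (hB N)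
  have hmeas : AEStronglyMeasurable (fun x => |f x| ^ p) μ :=
    (by fun_prop : Measurable fun x => |f x| ^ p).aestronglyMeasurable
  have hnonneg : 0 ≤ᵐ[μ] fun x => |f x| ^ p := .of_forall fun x => by positivity
  have hint : Integrable (fun x => |f x| ^ p) μ :=
    ⟨hmeas, (hasFiniteIntegral_iff_ofReal hnonneg).mpr (hlint.trans_lt ENNReal.ofReal_lt_top)⟩
  refine ⟨hint, ?_⟩
  rw [integral_eq_lintegral_of_nonneg_ae hnonneg hmeas]
  exact ENNReal.toReal_le_of_le_ofReal ((integral_nonneg fun x => by positivity).trans (hB 0)) hlint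

lemma aestronglyMeasurable_of_integrable_min_sq_norm_mul {E : Type*} [NormedAddCommGroup E]
    [MeasurableSpace E] [OpensMeasurableSpace E] {μ : Measure E} [NullSingletonClass μ]
    {K : E → ℝ} (hK : Integrable (fun x => min (‖x‖ ^ 2) 1 * K x) μ) :
    AEStronglyMeasurable K μ := by
  have hw : Measurable fun x : E => (min (‖x‖ ^ 2) 1)⁻¹ := by fun_prop
  refine (hw.aestronglyMeasurable.mul hK.aestronglyMeasurable).congr ?_
  filter_upwards [compl_mem_ae_iff.mpr (measure_singleton (0 : E))] with x hx
  have : min (‖x‖ ^ 2) 1 ≠ 0 := by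
    have : x ≠ 0 := hx
    positivity
  exact inv_mul_cancel_left₀ this (K x)

lemma gInner_self {n : ℕ} (K : EV n → ℝ) (u : EV n → ℝ) :
    gInner K u u = ∫ p : EV n × EV n, (u p.1 - u p.2) ^ 2 * K (p.1 - p.2) := by
  simp only [gInner, sq]

lemma integral_abs_rpow_le_of_lpNorm_le {n : ℕ} {Ω : Set (EV n)} {f : EV n → ℝ} {p M : ℝ}
    (hp : 0 < p) (h : lpNorm Ω p f ≤ M) : ∫ x in Ω, |f x| ^ p ≤ M ^ p := by
  have hA : 0 ≤ ∫ x in Ω, |f x| ^ p := integral_nonneg fun x => by positivity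
  calc ∫ x in Ω, |f x| ^ p = lpNorm Ω p f ^ p := by
        rw [_root_.lpNorm, ← Real.rpow_mul hA, one_div, inv_mul_cancel₀ hp.ne', Real.rpow_one]
    _ ≤ M ^ p := Real.rpow_le_rpow (by rw [_root_.lpNorm]; positivity) h hp.le

lemma eq_zero_of_tendsto_div_self {g : ℝ → ℝ} (hg : ContinuousAt g 0)
    (hg0 : Tendsto (fun t => g t / t) (𝓝[≠] 0) (𝓝 0)) : g 0 = 0 := by
  have h : Tendsto (fun t => g t / t * t) (𝓝[≠] 0) (𝓝 0) := by
    simpa using hg0.mul (tendsto_nhdsWithin_of_tendsto_nhds tendsto_id)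
  refine tendsto_nhds_unique (hg.tendsto.mono_left nhdsWithin_le_nhds) (h.congr' ?_)
  filter_upwards [self_mem_nhdsWithin] with t ht
  exact div_mul_cancel₀ _ ht

lemma exists_abs_le_mul_abs_of_tendsto_div_self {g : ℝ → ℝ} (hg : ContinuousAt g 0)
    (hg0 : Tendsto (fun t => g t / t) (𝓝[≠] 0) (𝓝 0)) {ε : ℝ} (hε : 0 < ε) :
    ∃ δ > 0, ∀ t, |t| < δ → |g t| ≤ ε * |t| := by
  obtain ⟨δ, hδ, hsmall⟩ := Metric.eventually_nhds_iff.mp <| eventually_nhdsWithin_iff.mp <|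
    (Metric.tendsto_nhds.mp hg0) ε hε
  refine ⟨δ, hδ, fun t ht => ?_⟩
  rcases eq_or_ne t 0 with rfl | ht0
  · simp [eq_zero_of_tendsto_div_self hg hg0]
  · have := hsmall (by simpa using ht) ht0
    rw [Real.dist_eq, sub_zero, abs_div, div_lt_iff₀ (abs_pos.mpr ht0)] at this
    exact this.le

lemma rpow_le_rpow_div_rpow_sub {x δ a b : ℝ} (hδ : 0 < δ) (hδx : δ ≤ x) (hab : a ≤ b) :
    x ^ a ≤ x ^ b / δ ^ (b - a) := by
  have hx : 0 < x := hδ.trans_le hδx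
  rw [le_div_iff₀ (by positivity), show b = a + (b - a) by ring, Real.rpow_add hx,
    add_sub_cancel_left]
  gcongr

lemma exists_abs_le_eps_mul_add_rpow {g : ℝ → ℝ} (hg : ContinuousAt g 0)
    (hg0 : Tendsto (fun t => g t / t) (𝓝[≠] 0) (𝓝 0)) {a₁ a₂ q r : ℝ} (ha₁ : 0 ≤ a₁)
    (ha₂ : 0 ≤ a₂) (hqr : q ≤ r) (hr : 1 ≤ r) (hg1 : ∀ t, |g t| ≤ a₁ + a₂ * |t| ^ (q - 1))
    {ε : ℝ} (hε : 0 < ε) :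
    ∃ C ≥ 0, ∀ t, |g t| ≤ ε * |t| + C * |t| ^ (r - 1) := by
  obtain ⟨δ, hδ, hsmall⟩ := exists_abs_le_mul_abs_of_tendsto_div_self hg hg0 hε
  refine ⟨a₁ / δ ^ (r - 1) + a₂ / δ ^ (r - q), by positivity, fun t => ?_⟩
  rcases lt_or_ge |t| δ with ht | ht
  · exact (hsmall t ht).trans (le_add_of_nonneg_right (by positivity))
  · have h₁ := rpow_le_rpow_div_rpow_sub (a := 0) (b := r - 1) hδ ht (by linarith)
    have h₂ := rpow_le_rpow_div_rpow_sub (a := q - 1) (b := r - 1) hδ ht (by linarith)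
    rw [Real.rpow_zero, sub_zero] at h₁
    calc |g t| ≤ a₁ * 1 + a₂ * |t| ^ (q - 1) := by simpa using hg1 t
      _ ≤ a₁ * (|t| ^ (r - 1) / δ ^ (r - 1)) + a₂ * (|t| ^ (r - 1) / δ ^ (r - 1 - (q - 1))) := by
          gcongr
      _ = (a₁ / δ ^ (r - 1) + a₂ / δ ^ (r - q)) * |t| ^ (r - 1) := by
          rw [show r - 1 - (q - 1) = r - q by ring]
          ring
      _ ≤ ε * |t| + (a₁ / δ ^ (r - 1) + a₂ / δ ^ (r - q)) * |t| ^ (r - 1) :=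
          le_add_of_nonneg_left (by positivity)

lemma abs_primitive_le {g : ℝ → ℝ} {ε C r : ℝ} (hε : 0 ≤ ε) (hC : 0 ≤ C) (hr : 1 ≤ r)
    (hg : ∀ t, |g t| ≤ ε * |t| + C * |t| ^ (r - 1)) (t : ℝ) :
    |∫ τ in (0 : ℝ)..t, g τ| ≤ ε * |t| ^ (2 : ℝ) + C * |t| ^ r := by
  have hbound : ∀ τ ∈ uIoc 0 t, ‖g τ‖ ≤ ε * |t| + C * |t| ^ (r - 1) := by
    intro τ hτ
    have hτt : |τ| ≤ |t| := by
      rcases mem_uIoc.mp hτ with ⟨h₁, h₂⟩ | ⟨h₁, h₂⟩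
      · rw [abs_of_pos h₁, abs_of_pos (h₁.trans_le h₂)]; exact h₂
      · rw [abs_of_neg (h₁.trans_le h₂), abs_of_nonpos h₂]; linarith
    refine (hg τ).trans ?_
    gcongr
  calc |∫ τ in (0 : ℝ)..t, g τ| ≤ (ε * |t| + C * |t| ^ (r - 1)) * |t - 0| :=
        intervalIntegral.norm_integral_le_of_norm_le_const hbound
    _ = ε * |t| ^ (2 : ℝ) + C * |t| ^ r := by
        rcases eq_or_ne t 0 with rfl | ht
        · simp [(by linarith : r ≠ 0)]
        rw [sub_zero, Real.rpow_two, add_mul, mul_assoc, mul_assoc,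
          ← Real.rpow_add_one (by positivity), sub_add_cancel, sq]

lemma two_lt_twoStar {n : ℕ} {s : ℝ} (hs : 0 < s) (hn : 2 * s < n) : 2 < twoStar n s := by
  rw [twoStar, lt_div_iff₀ (by linarith)]
  linarith

lemma exists_pos_mul_rpow_le_mul_sq (D : ℝ) {κ r : ℝ} (hκ : 0 < κ) (hr : 2 < r) :
    ∃ ρ > 0, D * ρ ^ r ≤ κ * ρ ^ 2 := by
  have hlim : Tendsto (fun ρ : ℝ => D * ρ ^ (r - 2)) (𝓝[>] 0) (𝓝 0) := by
    have := ((Real.continuousAt_rpow_const 0 (r - 2) (by right; linarith)).tendsto.const_mul D)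
    simpa [Real.zero_rpow (by linarith : r - 2 ≠ 0)] using this.mono_left nhdsWithin_le_nhds
  obtain ⟨ρ, hρD, hρ⟩ := ((hlim.eventually (ge_mem_nhds hκ)).and self_mem_nhdsWithin).exists
  refine ⟨ρ, hρ, ?_⟩
  calc D * ρ ^ r = D * ρ ^ (r - 2) * ρ ^ 2 := by
        rw [mul_assoc, ← Real.rpow_two, ← Real.rpow_add hρ, sub_add_cancel]
    _ ≤ κ * ρ ^ 2 := by gcongr

lemma setIntegral_comp_le {n : ℕ} {Ω : Set (EV n)} {G : ℝ → ℝ} (hG : Continuous G) {ε C r : ℝ}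
    (hGle : ∀ t, |G t| ≤ ε * |t| ^ (2 : ℝ) + C * |t| ^ r)
    {u : EV n → ℝ} (hu : Measurable u) (hu₂ : IntegrableOn (fun x => |u x| ^ (2 : ℝ)) Ω)
    (huᵣ : IntegrableOn (fun x => |u x| ^ r) Ω) :
    ∫ x in Ω, G (u x) ≤ ε * (∫ x in Ω, |u x| ^ (2 : ℝ)) + C * ∫ x in Ω, |u x| ^ r := by
  have hdom := (hu₂.const_mul ε).add (huᵣ.const_mul C)
  have hGu : IntegrableOn (fun x => G (u x)) Ω :=
    hdom.mono' (hG.measurable.comp hu).aestronglyMeasurable (.of_forall fun x => hGle (u x))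
  calc ∫ x in Ω, G (u x) ≤ ∫ x in Ω, (ε * |u x| ^ (2 : ℝ) + C * |u x| ^ r) :=
        integral_mono hGu hdom fun x => (le_abs_self _).trans (hGle (u x))
    _ = ε * (∫ x in Ω, |u x| ^ (2 : ℝ)) + C * ∫ x in Ω, |u x| ^ r := by
        rw [integral_add (hu₂.const_mul ε) (huᵣ.const_mul C), integral_const_mul,
          integral_const_mul]

section GagliardoSpace

variable {n : ℕ} [NeZero n] {K : EV n → ℝ} {Ω : Set (EV n)}

lemma ae_kernel_sub_nonneg (hKpos : ∀ x : EV n, x ≠ 0 → 0 < K x) :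
    ∀ᵐ p : EV n × EV n, 0 ≤ K (p.1 - p.2) := by
  have hK0 : ∀ᵐ x : EV n, 0 ≤ K x := by
    filter_upwards [compl_mem_ae_iff.mpr (measure_singleton (0 : EV n))] with x hx
    exact (hKpos x hx).le
  rw [Measure.volume_eq_prod]
  exact (quasiMeasurePreserving_sub volume volume).ae hK0

lemma MemX0.comp_lipschitzWith (hKpos : ∀ x : EV n, x ≠ 0 → 0 < K x)
    (hK1 : Integrable (fun x : EV n => min (‖x‖ ^ 2) 1 * K x))
    {φ : ℝ → ℝ} (hφ : LipschitzWith 1 φ) (hφ0 : φ 0 = 0) {u : EV n → ℝ} (hu : MemX0 K Ω u) :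
    MemX0 K Ω (φ ∘ u) ∧ gNorm K (φ ∘ u) ≤ gNorm K u := by
  have hK : AEStronglyMeasurable (fun p : EV n × EV n => K (p.1 - p.2)) volume := by
    rw [Measure.volume_eq_prod]
    exact (aestronglyMeasurable_of_integrable_min_sq_norm_mul hK1).comp_quasiMeasurePreserving
      (quasiMeasurePreserving_sub volume volume)
  have hφu : Measurable (φ ∘ u) := hφ.continuous.measurable.comp hu.meas
  have hle : ∀ᵐ p : EV n × EV n, ‖((φ ∘ u) p.1 - (φ ∘ u) p.2) ^ 2 * K (p.1 - p.2)‖ ≤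
      (u p.1 - u p.2) ^ 2 * K (p.1 - p.2) := by
    filter_upwards [ae_kernel_sub_nonneg hKpos] with p hp
    have hcontr : |φ (u p.1) - φ (u p.2)| ≤ |u p.1 - u p.2| := by
      simpa [← Real.dist_eq] using hφ.dist_le_mul (u p.1) (u p.2)
    rw [Real.norm_of_nonneg (by positivity)]
    exact mul_le_mul_of_nonneg_right (sq_le_sq.mpr hcontr) hp
  have hfin : Integrable fun p : EV n × EV n => ((φ ∘ u) p.1 - (φ ∘ u) p.2) ^ 2 * K (p.1 - p.2) :=
    hu.fin.mono' ((((hφu.comp measurable_fst).sub (hφu.comp measurable_snd)).pow_const 2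
      ).aestronglyMeasurable.mul hK) hle
  refine ⟨⟨hφu, ?_, hfin⟩, ?_⟩
  · filter_upwards [hu.zero] with x hx hxΩ
    simp [hx hxΩ, hφ0]
  · rw [gNorm, gNorm, gInner_self, gInner_self]
    exact Real.sqrt_le_sqrt <|
      integral_mono_ae hfin hu.fin (hle.mono fun p hp => (le_abs_self _).trans hp)

lemma MemX0.integral_abs_rpow_le (hKpos : ∀ x : EV n, x ≠ 0 → 0 < K x)
    (hK1 : Integrable (fun x : EV n => min (‖x‖ ^ 2) 1 * K x)) (hΩ : volume Ω ≠ ⊤)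
    {p cp : ℝ} (hp : 0 < p) (hcp : 0 ≤ cp)
    (hemb : ∀ v, MemX0 K Ω v → lpNorm Ω p v ≤ cp * gNorm K v) {u : EV n → ℝ} (hu : MemX0 K Ω u) :
    IntegrableOn (fun x => |u x| ^ p) Ω ∧ ∫ x in Ω, |u x| ^ p ≤ (cp * gNorm K u) ^ p := by
  have := isFiniteMeasure_restrict.mpr hΩ
  refine integrable_abs_rpow_of_integral_trunc_le hu.meas hp fun N => ?_
  obtain ⟨hmem, hle⟩ := hu.comp_lipschitzWith hKpos hK1 (lipschitzWith_trunc N)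
    (trunc_zero N.cast_nonneg)
  exact integral_abs_rpow_le_of_lpNorm_le hp ((hemb _ hmem).trans (by gcongr))

lemma MemX0.le_energy (hKpos : ∀ x : EV n, x ≠ 0 → 0 < K x)
    (hK1 : Integrable (fun x : EV n => min (‖x‖ ^ 2) 1 * K x)) (hΩ : volume Ω ≠ ⊤)
    {s : ℝ} (hr : 1 ≤ twoStar n s) {c₂ cᵣ : ℝ} (hc₂ : 0 ≤ c₂) (hcᵣ : 0 ≤ cᵣ)
    (hemb₂ : ∀ v, MemX0 K Ω v → lpNorm Ω 2 v ≤ c₂ * gNorm K v)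
    (hembᵣ : ∀ v, MemX0 K Ω v → lpNorm Ω (twoStar n s) v ≤ cᵣ * gNorm K v)
    {μ lam : ℝ} (hμ : 0 ≤ μ) (hlam : 0 ≤ lam) {g : ℝ → ℝ} (hgc : Continuous g) {ε C : ℝ}
    (hε : 0 ≤ ε) (hC : 0 ≤ C) (hg : ∀ t, |g t| ≤ ε * |t| + C * |t| ^ (twoStar n s - 1))
    {u : EV n → ℝ} (hu : MemX0 K Ω u) :
    1 / 2 * gNorm K u ^ 2 - lam * ε * c₂ ^ 2 * gNorm K u ^ 2
      - (μ / twoStar n s + lam * C) * cᵣ ^ twoStar n s * gNorm K u ^ twoStar n s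
      ≤ energy s K Ω μ lam g u := by
  set r := twoStar n s
  have hnorm : 0 ≤ gNorm K u := Real.sqrt_nonneg _
  obtain ⟨hu₂, hu₂_le⟩ := hu.integral_abs_rpow_le hKpos hK1 hΩ two_pos hc₂ hemb₂
  obtain ⟨huᵣ, huᵣ_le⟩ := hu.integral_abs_rpow_le hKpos hK1 hΩ (by linarith) hcᵣ hembᵣ
  have hG := setIntegral_comp_le (intervalIntegral.continuous_primitive hgc.intervalIntegrable 0)
    (abs_primitive_le hε hC (by linarith) hg) hu.meas hu₂ huᵣ
  rw [Real.mul_rpow hc₂ hnorm, Real.rpow_two, Real.rpow_two] at hu₂_le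
  rw [Real.mul_rpow hcᵣ hnorm] at huᵣ_le
  calc _ = 1 / 2 * gNorm K u ^ 2 - μ / r * (cᵣ ^ r * gNorm K u ^ r)
        - lam * (ε * (c₂ ^ 2 * gNorm K u ^ 2) + C * (cᵣ ^ r * gNorm K u ^ r)) := by
        ring
    _ ≤ energy s K Ω μ lam g u := by
        rw [energy]
        gcongr
        exact hG.trans (by gcongr)

end GagliardoSpace

theorem statement17_general
    (n : ℕ) (s : ℝ) (hs : s ∈ Set.Ioo (0:ℝ) 1) (hn : 2 * s < n)
    (Ω : Set (EV n)) (hΩb : Bornology.IsBounded Ω)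
    (K : EV n → ℝ)
    (hKpos : ∀ x : EV n, x ≠ 0 → 0 < K x)
    (hK1 : Integrable (fun x : EV n => min (‖x‖ ^ 2) 1 * K x))
    -- finiteness of the embedding constants `c_p`, `p ∈ [1,2*]`:
    (hemb : ∀ p : ℝ, 1 ≤ p → p ≤ twoStar n s → ∃ cp > (0:ℝ),
        ∀ u, MemX0 K Ω u → lpNorm Ω p u ≤ cp * gNorm K u)
    (lam μ : ℝ) (hlam : 0 < lam) (hμ : 0 < μ)
    (g : ℝ → ℝ) (hgc : Continuous g)
    (a₁ a₂ q : ℝ) (ha₁ : 0 < a₁) (ha₂ : 0 < a₂) (hq₂ : q < twoStar n s)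
    (hg1 : ∀ t : ℝ, |g t| ≤ a₁ + a₂ * |t| ^ (q - 1))
    -- (g3): `lim_{t→0} g(t)/t = 0`:
    (hg3 : Tendsto (fun t : ℝ => g t / t) (𝓝[≠] 0) (𝓝 0)) :
    ∃ ρ > (0:ℝ), ∃ α > (0:ℝ), ∀ u : EV n → ℝ, MemX0 K Ω u → gNorm K u = ρ →
      α ≤ energy s K Ω μ lam g u := by
  have : NeZero n := ⟨by rintro rfl; simp at hn; linarith [hs.1]⟩
  have hr : 2 < twoStar n s := two_lt_twoStar hs.1 hn
  obtain ⟨c₂, hc₂, hemb₂⟩ := hemb 2 one_le_two hr.le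
  obtain ⟨cᵣ, hcᵣ, hembᵣ⟩ := hemb (twoStar n s) (by linarith) le_rfl
  set ε := 1 / (4 * lam * c₂ ^ 2)
  have hε : lam * ε * c₂ ^ 2 = 1 / 4 := by
    simp only [ε]
    field_simp
  obtain ⟨C, hC, hgC⟩ := exists_abs_le_eps_mul_add_rpow hgc.continuousAt hg3 ha₁.le ha₂.le
    hq₂.le (by linarith) hg1 (ε := ε) (by positivity)
  obtain ⟨ρ, hρ, hρr⟩ := exists_pos_mul_rpow_le_mul_sq
    ((μ / twoStar n s + lam * C) * cᵣ ^ twoStar n s) (κ := 1 / 8) (by norm_num) hr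
  refine ⟨ρ, hρ, ρ ^ 2 / 8, by positivity, fun u hu hnorm => ?_⟩
  have hE := hu.le_energy hKpos hK1 hΩb.measure_lt_top.ne (by linarith) hc₂.le hcᵣ.le hemb₂ hembᵣ hμ.le
    hlam.le hgc (by positivity) hC hgC
  rw [hnorm, hε] at hE
  linarith

/-- **Mountain-pass geometry (i)** (step in the proof of Theorem 4.1): under
(g1) and (g3) there are `ρ > 0` and `α > 0` with `E_{λ,μ}(u) ≥ α` for all
`u ∈ X₀` with `‖u‖ = ρ`. -/
theorem statement17
    (n : ℕ) (s : ℝ) (hs : s ∈ Set.Ioo (0:ℝ) 1) (hn : 2 * s < n)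
    (Ω : Set (EV n)) (hΩo : IsOpen Ω) (hΩne : Ω.Nonempty) (hΩb : Bornology.IsBounded Ω)
    (K : EV n → ℝ)
    (hKpos : ∀ x : EV n, x ≠ 0 → 0 < K x)
    (hK1 : Integrable (fun x : EV n => min (‖x‖ ^ 2) 1 * K x))
    (hK2 : ∃ k₀ > 0, ∀ x : EV n, x ≠ 0 → k₀ * ‖x‖ ^ (-((n : ℝ) + 2 * s)) ≤ K x)
    (c : ℝ) (hc : 0 < c)
    (hclub : IsLUB {ρ : ℝ | ∃ u, MemX0 K Ω u ∧
        ¬ (∀ᵐ x ∂(volume : Measure (EV n)), u x = 0) ∧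
        ρ = lpNorm Ω (twoStar n s) u / gNorm K u} c)
    -- finiteness of the embedding constants `c_p`, `p ∈ [1,2*]`:
    (hemb : ∀ p : ℝ, 1 ≤ p → p ≤ twoStar n s → ∃ cp > (0:ℝ),
        ∀ u, MemX0 K Ω u → lpNorm Ω p u ≤ cp * gNorm K u)
    (lam μ : ℝ) (hlam : 0 < lam) (hμ : 0 < μ)
    (g : ℝ → ℝ) (hgc : Continuous g)
    (a₁ a₂ q : ℝ) (ha₁ : 0 < a₁) (ha₂ : 0 < a₂) (hq₁ : 1 ≤ q) (hq₂ : q < twoStar n s)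
    (hg1 : ∀ t : ℝ, |g t| ≤ a₁ + a₂ * |t| ^ (q - 1))
    -- (g3): `lim_{t→0} g(t)/t = 0`:
    (hg3 : Tendsto (fun t : ℝ => g t / t) (𝓝[≠] 0) (𝓝 0)) :
    ∃ ρ > (0:ℝ), ∃ α > (0:ℝ), ∀ u : EV n → ℝ, MemX0 K Ω u → gNorm K u = ρ →
      α ≤ energy s K Ω μ lam g u :=
  statement17_general n s hs hn Ω hΩb K hKpos hK1 hemb lam μ hlam hμ g hgc a₁ a₂ q ha₁ ha₂ hq₂ hg1
    hg3
end
end
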